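/- (Weak duality for the per-antenna power minimax problem.) Let h_{j,i,u} ∈ ℂ^{N_b}, w_{j,v} ∈ ℂ^{N_b}, reals β ∈ [0,1), α = 1 − β, σ² > 0, targets γ_{i,u} > 0, and p₀ a real. Suppose the primal point (W, p₀) is feasible: Γ_{i,u}(W) ≥ γ_{i,u} for all i,u, and α[W_i W_iᴴ]_{m,m} ≤ p₀ for all i,m. Suppose the dual variables are feasible: λ_{i,u} ≥ 0, D_i = diag(μ_{i,1},…,μ_{i,N_b}) with μ_{i,m} ≥ 0, tr(D_i) ≤ N_b for all i, and for all i,u the Hermitian matrix α D_i − α²(1 + 1/γ_{i,u}) λ_{i,u} h_{i,i,u} h_{i,i,u}ᴴ + α² ∑_{j,v} λ_{j,v} h_{i,j,v} h_{i,j,v}ᴴ + αβ·diag(∑_{j,v} λ_{j,v} h_{i,j,v} h_{i,j,v}ᴴ) is positive semidefinite. Then ∑_{i,u} λ_{i,u} σ² ≤ N_c N_b p₀. -/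

import Mathlib

/-!
Weak duality via the Lagrangian identity. Summing the dual constraints
`w_{i,u}ᴴ M_{i,u} w_{i,u} ≥ 0` over all users and exchanging the order of summation turns the
interference and quantization-noise terms caused by beam `(i,u)` into the `λ`-weighted total
received power `T_{j,v}` and noise `Q_{j,v}` at every user `(j,v)`:
`∑ α w_{i,u}ᴴ D_i w_{i,u} ≥ ∑ λ_{j,v} ((1 + 1/γ_{j,v}) α² S_{j,v} − α² T_{j,v} − Q_{j,v})`,
where `S_{j,v}` is the useful signal power. The SINR constraint makes each bracket at least `σ²`,
while the left side is `∑_i ∑_m μ_{i,m} α[W_i W_iᴴ]_{m,m} ≤ ∑_i tr(D_i) p₀ ≤ N_c N_b p₀`.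
-/

open Matrix BigOperators
open scoped ComplexOrder

/-- Quantization noise term `Q_{i,u} = αβ ∑_j h_{j,i,u}ᴴ diag(∑_v w_{j,v} w_{j,v}ᴴ) h_{j,i,u}`. -/
noncomputable def Qnoise {Nb Nc Nu : ℕ}
    (h : Fin Nc → Fin Nc → Fin Nu → (Fin Nb → ℂ)) (α β : ℝ)
    (w : Fin Nc → Fin Nu → (Fin Nb → ℂ)) (i : Fin Nc) (u : Fin Nu) : ℝ :=
  α * β * (∑ j : Fin Nc, star (h j i u) ⬝ᵥ
    (Matrix.diagonal (Matrix.diag (∑ v : Fin Nu,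
      Matrix.vecMulVec (w j v) (star (w j v))))).mulVec (h j i u)).re

/-- Downlink SINR
`Γ_{i,u}(W) = α²|h_{i,i,u}ᴴ w_{i,u}|² / (α² ∑_{(j,v)≠(i,u)} |h_{j,i,u}ᴴ w_{j,v}|² + Q_{i,u} + σ²)`. -/
noncomputable def Γdl {Nb Nc Nu : ℕ}
    (h : Fin Nc → Fin Nc → Fin Nu → (Fin Nb → ℂ)) (α β σsq : ℝ)
    (w : Fin Nc → Fin Nu → (Fin Nb → ℂ)) (i : Fin Nc) (u : Fin Nu) : ℝ :=
  α ^ 2 * ‖star (h i i u) ⬝ᵥ w i u‖ ^ 2 /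
    (α ^ 2 * ∑ p ∈ Finset.univ.erase (i, u), ‖star (h p.1 i u) ⬝ᵥ w p.1 p.2‖ ^ 2
      + Qnoise h α β w i u + σsq)

namespace Matrix

variable {n : Type*}

lemma star_dotProduct_vecMulVec_star_mulVec [Fintype n] (a x : n → ℂ) :
    star x ⬝ᵥ vecMulVec a (star a) *ᵥ x = ((‖star a ⬝ᵥ x‖ ^ 2 : ℝ) : ℂ) := by
  rw [vecMulVec_mulVec, op_smul_eq_smul, dotProduct_smul, star_dotProduct x a, smul_eq_mul,
    Complex.star_def, Complex.mul_conj', Complex.ofReal_pow]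

lemma star_dotProduct_diagonal_mulVec [Fintype n] [DecidableEq n] (d x : n → ℂ) :
    star x ⬝ᵥ diagonal d *ᵥ x = ∑ m, d m * ((‖x m‖ ^ 2 : ℝ) : ℂ) := by
  refine Finset.sum_congr rfl fun m _ => ?_
  rw [mulVec_diagonal, Pi.star_apply, Complex.star_def, Complex.ofReal_pow, ← Complex.conj_mul']
  ring

lemma diag_vecMulVec_star (a : n → ℂ) (m : n) :
    diag (vecMulVec a (star a)) m = ((‖a m‖ ^ 2 : ℝ) : ℂ) := by
  rw [diag_vecMulVec, Pi.mul_apply, Pi.star_apply, Complex.star_def, Complex.mul_conj']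
  norm_cast

lemma re_sum_vecMulVec_star_apply {ι : Type*} [Fintype ι] (w : ι → n → ℂ) (m : n) :
    ((∑ u, vecMulVec (w u) (star (w u))) m m).re = ∑ u, ‖w u m‖ ^ 2 := by
  rw [sum_apply, Complex.re_sum]
  refine Finset.sum_congr rfl fun u _ => ?_
  rw [← diag_apply (vecMulVec (w u) (star (w u))), diag_vecMulVec_star, Complex.ofReal_re]

end Matrix

lemma add_le_one_add_inv_mul_of_le_div {s d γ : ℝ} (hs : 0 ≤ s) (hγ : 0 < γ) (h : γ ≤ s / d) :
    s + d ≤ (1 + 1 / γ) * s := by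
  have hd : 0 < d := by
    by_contra! hd
    linarith [div_nonpos_of_nonneg_of_nonpos hs hd]
  have : d ≤ s / γ := by
    rw [le_div_iff₀ hγ, mul_comm]
    exact (le_div_iff₀ hd).1 h
  calc s + d ≤ s + s / γ := by linarith
    _ = (1 + 1 / γ) * s := by ring

lemma sum_mul_le_card_mul {ι : Type*} [Fintype ι] {μ P : ι → ℝ} {p : ℝ} (hμ : ∀ m, 0 ≤ μ m)
    (hμ_sum : ∑ m, μ m ≤ Fintype.card ι) (hP_nonneg : ∀ m, 0 ≤ P m) (hP : ∀ m, P m ≤ p) :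
    ∑ m, μ m * P m ≤ Fintype.card ι * p := by
  cases isEmpty_or_nonempty ι with
  | inl _ => simp
  | inr hι =>
    have hp : 0 ≤ p := (hP_nonneg hι.some).trans (hP hι.some)
    calc ∑ m, μ m * P m ≤ ∑ m, μ m * p :=
          Finset.sum_le_sum fun m _ => mul_le_mul_of_nonneg_left (hP m) (hμ m)
      _ = (∑ m, μ m) * p := (Finset.sum_mul ..).symm
      _ ≤ Fintype.card ι * p := mul_le_mul_of_nonneg_right hμ_sum hp

lemma sum_weighted_antenna_power_le {ι n : Type*} [Fintype ι] [Fintype n] {α p : ℝ}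
    {μ : n → ℝ} {w : ι → n → ℂ} (hα : 0 ≤ α) (hμ : ∀ m, 0 ≤ μ m)
    (hμ_sum : ∑ m, μ m ≤ Fintype.card n)
    (hpower : ∀ m, α * ((∑ u, vecMulVec (w u) (star (w u))) m m).re ≤ p) :
    ∑ u, α * ∑ m, μ m * ‖w u m‖ ^ 2 ≤ Fintype.card n * p := by
  calc ∑ u, α * ∑ m, μ m * ‖w u m‖ ^ 2 = ∑ m, μ m * (α * ∑ u, ‖w u m‖ ^ 2) := by
        simp only [Finset.mul_sum]
        rw [Finset.sum_comm]
        exact Finset.sum_congr rfl fun m _ => Finset.sum_congr rfl fun u _ => by ring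
    _ ≤ Fintype.card n * p :=
        sum_mul_le_card_mul hμ hμ_sum (fun m => by positivity)
          fun m => by simpa only [re_sum_vecMulVec_star_apply] using hpower m

section Downlink

variable {Nb Nc Nu : ℕ}

noncomputable def dualMatrix (h : Fin Nc → Fin Nc → Fin Nu → (Fin Nb → ℂ)) (α β : ℝ)
    (γ lam : Fin Nc → Fin Nu → ℝ) (μ : Fin Nc → Fin Nb → ℝ) (i : Fin Nc) (u : Fin Nu) :
    Matrix (Fin Nb) (Fin Nb) ℂ :=
  (α : ℂ) • diagonal (fun m => (μ i m : ℂ))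
    - ((α : ℂ) ^ 2 * (1 + 1 / (γ i u : ℂ)) * (lam i u : ℂ)) •
        vecMulVec (h i i u) (star (h i i u))
    + ((α : ℂ) ^ 2) • ∑ p : Fin Nc × Fin Nu,
        (lam p.1 p.2 : ℂ) • vecMulVec (h i p.1 p.2) (star (h i p.1 p.2))
    + ((α * β : ℝ) : ℂ) • diagonal (diag (∑ p : Fin Nc × Fin Nu,
        (lam p.1 p.2 : ℂ) • vecMulVec (h i p.1 p.2) (star (h i p.1 p.2))))

noncomputable def dualForm (h : Fin Nc → Fin Nc → Fin Nu → (Fin Nb → ℂ)) (α β : ℝ)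
    (γ lam : Fin Nc → Fin Nu → ℝ) (μ : Fin Nc → Fin Nb → ℝ) (i : Fin Nc) (u : Fin Nu)
    (x : Fin Nb → ℂ) : ℝ :=
  α * ∑ m, μ i m * ‖x m‖ ^ 2
    - α ^ 2 * (1 + 1 / γ i u) * lam i u * ‖star (h i i u) ⬝ᵥ x‖ ^ 2
    + α ^ 2 * ∑ p : Fin Nc × Fin Nu, lam p.1 p.2 * ‖star (h i p.1 p.2) ⬝ᵥ x‖ ^ 2
    + α * β * ∑ m, (∑ p : Fin Nc × Fin Nu, lam p.1 p.2 * ‖h i p.1 p.2 m‖ ^ 2) * ‖x m‖ ^ 2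

lemma star_dotProduct_dualMatrix_mulVec (h : Fin Nc → Fin Nc → Fin Nu → (Fin Nb → ℂ))
    (α β : ℝ) (γ lam : Fin Nc → Fin Nu → ℝ) (μ : Fin Nc → Fin Nb → ℝ) (i : Fin Nc) (u : Fin Nu)
    (x : Fin Nb → ℂ) :
    star x ⬝ᵥ dualMatrix h α β γ lam μ i u *ᵥ x = dualForm h α β γ lam μ i u x := by
  simp only [dualMatrix, dualForm, add_mulVec, sub_mulVec, smul_mulVec, sum_mulVec,
    dotProduct_add, dotProduct_sub, dotProduct_smul, dotProduct_sum, diag_sum, diag_smul,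
    Finset.sum_apply, Pi.smul_apply, diag_vecMulVec_star, star_dotProduct_diagonal_mulVec,
    star_dotProduct_vecMulVec_star_mulVec, smul_eq_mul]
  push_cast
  ring

lemma Qnoise_eq (h : Fin Nc → Fin Nc → Fin Nu → (Fin Nb → ℂ)) (α β : ℝ)
    (w : Fin Nc → Fin Nu → (Fin Nb → ℂ)) (i : Fin Nc) (u : Fin Nu) :
    Qnoise h α β w i u
      = α * β * ∑ p : Fin Nc × Fin Nu, ∑ m, ‖h p.1 i u m‖ ^ 2 * ‖w p.1 p.2 m‖ ^ 2 := by
  have hquad : ∀ j, star (h j i u) ⬝ᵥ diagonal (diag (∑ v, vecMulVec (w j v) (star (w j v))))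
      *ᵥ h j i u = ((∑ v, ∑ m, ‖h j i u m‖ ^ 2 * ‖w j v m‖ ^ 2 : ℝ) : ℂ) := by
    intro j
    simp only [star_dotProduct_diagonal_mulVec, diag_sum, Finset.sum_apply, diag_vecMulVec_star]
    push_cast
    simp only [Finset.sum_mul]
    rw [Finset.sum_comm]
    simp only [mul_comm]
  simp only [Qnoise, hquad, ← Complex.ofReal_sum, Complex.ofReal_re, Fintype.sum_prod_type]

noncomputable def totalRxPower (h : Fin Nc → Fin Nc → Fin Nu → (Fin Nb → ℂ))
    (w : Fin Nc → Fin Nu → (Fin Nb → ℂ)) (i : Fin Nc) (u : Fin Nu) : ℝ :=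
  ∑ p : Fin Nc × Fin Nu, ‖star (h p.1 i u) ⬝ᵥ w p.1 p.2‖ ^ 2

lemma totalRxPower_add_le_of_le_Γdl {h : Fin Nc → Fin Nc → Fin Nu → (Fin Nb → ℂ)}
    {w : Fin Nc → Fin Nu → (Fin Nb → ℂ)} {α β σsq γ : ℝ} {i : Fin Nc} {u : Fin Nu}
    (hγ : 0 < γ) (hΓ : γ ≤ Γdl h α β σsq w i u) :
    α ^ 2 * totalRxPower h w i u + Qnoise h α β w i u + σsq
      ≤ (1 + 1 / γ) * (α ^ 2 * ‖star (h i i u) ⬝ᵥ w i u‖ ^ 2) := by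
  have := add_le_one_add_inv_mul_of_le_div (by positivity) hγ hΓ
  rw [totalRxPower, ← Finset.add_sum_erase _ _ (Finset.mem_univ (i, u))]
  linarith

lemma sum_sum_lam_mul_rxPower_eq (h : Fin Nc → Fin Nc → Fin Nu → (Fin Nb → ℂ))
    (w : Fin Nc → Fin Nu → (Fin Nb → ℂ)) (lam : Fin Nc → Fin Nu → ℝ) :
    ∑ q : Fin Nc × Fin Nu, ∑ p : Fin Nc × Fin Nu,
        lam p.1 p.2 * ‖star (h q.1 p.1 p.2) ⬝ᵥ w q.1 q.2‖ ^ 2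
      = ∑ p : Fin Nc × Fin Nu, lam p.1 p.2 * totalRxPower h w p.1 p.2 := by
  simp only [totalRxPower, Finset.mul_sum]
  exact Finset.sum_comm

lemma sum_quantization_eq_sum_lam_mul_Qnoise (h : Fin Nc → Fin Nc → Fin Nu → (Fin Nb → ℂ))
    (w : Fin Nc → Fin Nu → (Fin Nb → ℂ)) (α β : ℝ) (lam : Fin Nc → Fin Nu → ℝ) :
    ∑ q : Fin Nc × Fin Nu, α * β * ∑ m,
        (∑ p : Fin Nc × Fin Nu, lam p.1 p.2 * ‖h q.1 p.1 p.2 m‖ ^ 2) * ‖w q.1 q.2 m‖ ^ 2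
      = ∑ p : Fin Nc × Fin Nu, lam p.1 p.2 * Qnoise h α β w p.1 p.2 := by
  simp only [Qnoise_eq, Finset.mul_sum, Finset.sum_mul]
  refine (Finset.sum_congr rfl fun q _ => Finset.sum_comm).trans (Finset.sum_comm.trans ?_)
  refine Finset.sum_congr rfl fun p _ => Finset.sum_congr rfl fun q _ =>
    Finset.sum_congr rfl fun m _ => ?_
  ring

lemma sum_dualForm_eq (h : Fin Nc → Fin Nc → Fin Nu → (Fin Nb → ℂ))
    (w : Fin Nc → Fin Nu → (Fin Nb → ℂ)) (α β : ℝ) (γ lam : Fin Nc → Fin Nu → ℝ)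
    (μ : Fin Nc → Fin Nb → ℝ) :
    ∑ q : Fin Nc × Fin Nu, dualForm h α β γ lam μ q.1 q.2 (w q.1 q.2)
      = ∑ q : Fin Nc × Fin Nu, α * ∑ m, μ q.1 m * ‖w q.1 q.2 m‖ ^ 2
        - ∑ q : Fin Nc × Fin Nu, lam q.1 q.2 *
            ((1 + 1 / γ q.1 q.2) * (α ^ 2 * ‖star (h q.1 q.1 q.2) ⬝ᵥ w q.1 q.2‖ ^ 2)
              - (α ^ 2 * totalRxPower h w q.1 q.2 + Qnoise h α β w q.1 q.2)) := by
  calc ∑ q : Fin Nc × Fin Nu, dualForm h α β γ lam μ q.1 q.2 (w q.1 q.2)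
      = ∑ q : Fin Nc × Fin Nu, (α * ∑ m, μ q.1 m * ‖w q.1 q.2 m‖ ^ 2
          - lam q.1 q.2 * ((1 + 1 / γ q.1 q.2) * (α ^ 2 * ‖star (h q.1 q.1 q.2) ⬝ᵥ w q.1 q.2‖ ^ 2))
          + α ^ 2 * ∑ p : Fin Nc × Fin Nu, lam p.1 p.2 * ‖star (h q.1 p.1 p.2) ⬝ᵥ w q.1 q.2‖ ^ 2
          + α * β * ∑ m, (∑ p : Fin Nc × Fin Nu, lam p.1 p.2 * ‖h q.1 p.1 p.2 m‖ ^ 2)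
              * ‖w q.1 q.2 m‖ ^ 2) :=
        Finset.sum_congr rfl fun q _ => by rw [dualForm]; ring
    _ = ∑ q : Fin Nc × Fin Nu, α * ∑ m, μ q.1 m * ‖w q.1 q.2 m‖ ^ 2
          - ∑ q : Fin Nc × Fin Nu, lam q.1 q.2 *
              ((1 + 1 / γ q.1 q.2) * (α ^ 2 * ‖star (h q.1 q.1 q.2) ⬝ᵥ w q.1 q.2‖ ^ 2))
          + α ^ 2 * ∑ p : Fin Nc × Fin Nu, lam p.1 p.2 * totalRxPower h w p.1 p.2
          + ∑ p : Fin Nc × Fin Nu, lam p.1 p.2 * Qnoise h α β w p.1 p.2 := by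
        rw [← sum_sum_lam_mul_rxPower_eq, ← sum_quantization_eq_sum_lam_mul_Qnoise,
          Finset.mul_sum, Finset.sum_add_distrib, Finset.sum_add_distrib, Finset.sum_sub_distrib]
    _ = _ := by
        simp only [mul_sub, mul_add, Finset.sum_sub_distrib, Finset.sum_add_distrib,
          Finset.mul_sum, mul_left_comm (α ^ 2)]
        ring

theorem sum_lam_mul_le_sum_weighted_power {h : Fin Nc → Fin Nc → Fin Nu → (Fin Nb → ℂ)}
    {w : Fin Nc → Fin Nu → (Fin Nb → ℂ)} {α β σsq : ℝ} {γ lam : Fin Nc → Fin Nu → ℝ}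
    {μ : Fin Nc → Fin Nb → ℝ} (hγ : ∀ i u, 0 < γ i u) (hlam : ∀ i u, 0 ≤ lam i u)
    (hSINR : ∀ i u, γ i u ≤ Γdl h α β σsq w i u)
    (hPSD : ∀ i u, (dualMatrix h α β γ lam μ i u).PosSemidef) :
    ∑ q : Fin Nc × Fin Nu, lam q.1 q.2 * σsq
      ≤ ∑ q : Fin Nc × Fin Nu, α * ∑ m, μ q.1 m * ‖w q.1 q.2 m‖ ^ 2 := by
  have hform (q : Fin Nc × Fin Nu) : 0 ≤ dualForm h α β γ lam μ q.1 q.2 (w q.1 q.2) := by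
    have := (hPSD q.1 q.2).dotProduct_mulVec_nonneg (w q.1 q.2)
    rwa [star_dotProduct_dualMatrix_mulVec, Complex.zero_le_real] at this
  have hbudget (q : Fin Nc × Fin Nu) : lam q.1 q.2 * σsq ≤ lam q.1 q.2 *
      ((1 + 1 / γ q.1 q.2) * (α ^ 2 * ‖star (h q.1 q.1 q.2) ⬝ᵥ w q.1 q.2‖ ^ 2)
        - (α ^ 2 * totalRxPower h w q.1 q.2 + Qnoise h α β w q.1 q.2)) := by
    have := totalRxPower_add_le_of_le_Γdl (hγ q.1 q.2) (hSINR q.1 q.2)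
    exact mul_le_mul_of_nonneg_left (by linarith) (hlam q.1 q.2)
  calc ∑ q : Fin Nc × Fin Nu, lam q.1 q.2 * σsq
      ≤ ∑ q : Fin Nc × Fin Nu, lam q.1 q.2 *
          ((1 + 1 / γ q.1 q.2) * (α ^ 2 * ‖star (h q.1 q.1 q.2) ⬝ᵥ w q.1 q.2‖ ^ 2)
            - (α ^ 2 * totalRxPower h w q.1 q.2 + Qnoise h α β w q.1 q.2)) :=
        Finset.sum_le_sum fun q _ => hbudget q
    _ = ∑ q : Fin Nc × Fin Nu, α * ∑ m, μ q.1 m * ‖w q.1 q.2 m‖ ^ 2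
          - ∑ q : Fin Nc × Fin Nu, dualForm h α β γ lam μ q.1 q.2 (w q.1 q.2) := by
        rw [sum_dualForm_eq]
        ring
    _ ≤ ∑ q : Fin Nc × Fin Nu, α * ∑ m, μ q.1 m * ‖w q.1 q.2 m‖ ^ 2 :=
        sub_le_self _ (Finset.sum_nonneg fun q _ => hform q)

end Downlink

theorem stmt12_general {Nb Nc Nu : ℕ}
    (h : Fin Nc → Fin Nc → Fin Nu → (Fin Nb → ℂ))
    (w : Fin Nc → Fin Nu → (Fin Nb → ℂ))
    (β α σsq : ℝ) (hβ : 0 ≤ β ∧ β < 1) (hα : α = 1 - β)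
    (γ : Fin Nc → Fin Nu → ℝ) (hγ : ∀ i u, 0 < γ i u)
    (p₀ : ℝ)
    (hprimalSINR : ∀ i u, Γdl h α β σsq w i u ≥ γ i u)
    (hprimalPA : ∀ (i : Fin Nc) (m : Fin Nb),
      α * ((∑ u : Fin Nu, vecMulVec (w i u) (star (w i u))) m m).re ≤ p₀)
    (lam : Fin Nc → Fin Nu → ℝ) (μ : Fin Nc → Fin Nb → ℝ)
    (hlam : ∀ i u, 0 ≤ lam i u) (hμ : ∀ i m, 0 ≤ μ i m)
    (htr : ∀ i : Fin Nc, ∑ m : Fin Nb, μ i m ≤ (Nb : ℝ))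
    (hPSD : ∀ (i : Fin Nc) (u : Fin Nu),
      ((α : ℂ) • diagonal (fun m => (μ i m : ℂ))
        - ((α : ℂ) ^ 2 * (1 + 1 / (γ i u : ℂ)) * (lam i u : ℂ)) •
            vecMulVec (h i i u) (star (h i i u))
        + ((α : ℂ) ^ 2) • ∑ p : Fin Nc × Fin Nu,
            (lam p.1 p.2 : ℂ) • vecMulVec (h i p.1 p.2) (star (h i p.1 p.2))
        + ((α * β : ℝ) : ℂ) • diagonal (diag (∑ p : Fin Nc × Fin Nu,
            (lam p.1 p.2 : ℂ) • vecMulVec (h i p.1 p.2) (star (h i p.1 p.2))))).PosSemidef) :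
    ∑ i : Fin Nc, ∑ u : Fin Nu, lam i u * σsq ≤ (Nc * Nb : ℕ) * p₀ := by
  have hα_nonneg : 0 ≤ α := by linarith [hβ.2]
  have hcell (i : Fin Nc) : ∑ u, α * ∑ m, μ i m * ‖w i u m‖ ^ 2 ≤ Nb * p₀ := by
    simpa using sum_weighted_antenna_power_le hα_nonneg (hμ i) (by simpa using htr i) (hprimalPA i)
  calc ∑ i : Fin Nc, ∑ u : Fin Nu, lam i u * σsq
      = ∑ q : Fin Nc × Fin Nu, lam q.1 q.2 * σsq := by rw [Fintype.sum_prod_type]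
    _ ≤ ∑ q : Fin Nc × Fin Nu, α * ∑ m, μ q.1 m * ‖w q.1 q.2 m‖ ^ 2 :=
        sum_lam_mul_le_sum_weighted_power hγ hlam hprimalSINR hPSD
    _ = ∑ i : Fin Nc, ∑ u : Fin Nu, α * ∑ m, μ i m * ‖w i u m‖ ^ 2 :=
        Fintype.sum_prod_type _
    _ ≤ ∑ _i : Fin Nc, (Nb * p₀ : ℝ) := Finset.sum_le_sum fun i _ => hcell i
    _ = (Nc * Nb : ℕ) * p₀ := by
        simp only [Finset.sum_const, Finset.card_univ, Fintype.card_fin, nsmul_eq_mul]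
        push_cast
        ring

/-- Weak duality for the per-antenna power minimax problem
(the weak-duality half of Corollary 1). If the primal point `(W, p₀)` satisfies
all SINR constraints `Γ_{i,u}(W) ≥ γ_{i,u}` and per-antenna constraints
`α[W_i W_iᴴ]_{m,m} ≤ p₀`, and the dual variables `λ_{i,u} ≥ 0`,
`D_i = diag(μ_{i,·}) ⪰ 0` with `tr(D_i) ≤ N_b` make the matrices
`α D_i − α²(1+1/γ_{i,u}) λ_{i,u} h_{i,i,u} h_{i,i,u}ᴴ
+ α² ∑_{j,v} λ_{j,v} h_{i,j,v} h_{i,j,v}ᴴ + αβ·diag(∑_{j,v} λ_{j,v} h_{i,j,v} h_{i,j,v}ᴴ)`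
positive semidefinite, then `∑_{i,u} λ_{i,u} σ² ≤ N_c N_b p₀`. -/
theorem stmt12 {Nb Nc Nu : ℕ}
    (h : Fin Nc → Fin Nc → Fin Nu → (Fin Nb → ℂ))
    (w : Fin Nc → Fin Nu → (Fin Nb → ℂ))
    (β α σsq : ℝ) (hβ : 0 ≤ β ∧ β < 1) (hα : α = 1 - β) (hσ : 0 < σsq)
    (γ : Fin Nc → Fin Nu → ℝ) (hγ : ∀ i u, 0 < γ i u)
    (p₀ : ℝ)
    (hprimalSINR : ∀ i u, Γdl h α β σsq w i u ≥ γ i u)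
    (hprimalPA : ∀ (i : Fin Nc) (m : Fin Nb),
      α * ((∑ u : Fin Nu, vecMulVec (w i u) (star (w i u))) m m).re ≤ p₀)
    (lam : Fin Nc → Fin Nu → ℝ) (μ : Fin Nc → Fin Nb → ℝ)
    (hlam : ∀ i u, 0 ≤ lam i u) (hμ : ∀ i m, 0 ≤ μ i m)
    (htr : ∀ i : Fin Nc, ∑ m : Fin Nb, μ i m ≤ (Nb : ℝ))
    (hPSD : ∀ (i : Fin Nc) (u : Fin Nu),
      ((α : ℂ) • diagonal (fun m => (μ i m : ℂ))
        - ((α : ℂ) ^ 2 * (1 + 1 / (γ i u : ℂ)) * (lam i u : ℂ)) •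
            vecMulVec (h i i u) (star (h i i u))
        + ((α : ℂ) ^ 2) • ∑ p : Fin Nc × Fin Nu,
            (lam p.1 p.2 : ℂ) • vecMulVec (h i p.1 p.2) (star (h i p.1 p.2))
        + ((α * β : ℝ) : ℂ) • diagonal (diag (∑ p : Fin Nc × Fin Nu,
            (lam p.1 p.2 : ℂ) • vecMulVec (h i p.1 p.2) (star (h i p.1 p.2))))).PosSemidef) :
    ∑ i : Fin Nc, ∑ u : Fin Nu, lam i u * σsq ≤ (Nc * Nb : ℕ) * p₀ :=
  stmt12_general h w β α σsq hβ hα γ hγ p₀ hprimalSINR hprimalPA lam μ hlam hμ htr hPSD
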